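/- Let p : Fin K → ℝ be a base distribution with p j > 0 and ∑ j, p j = 1, let g : Fin N → Fin K → ℝ satisfy ∑ j, p j * g i j = 0 for all i (each row is a score direction). Let Δ : Fin N → ℝ be nonzero with z = ∑ i, |Δ i|. Define the linearized network output P j = p j + ∑ i, Δ i * g i j, and define expert distributions q i j = p j * (1 + z * sign(Δ i) * g i j) with ensemble weights α i = |Δ i| / z. Then whenever Δ i ≠ 0 implies the expert formula is used, P j = ∑ i, α i * q i j holds exactly, and ∑ i, α i = 1. -/
import Mathlib

theorem neural_tangent_ensemble_identity
    (N K : ℕ) (p : Fin K → ℝ) (g : Fin N → Fin K → ℝ) (Δ : Fin N → ℝ)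
    (hpos : ∀ j, 0 < p j) (hsum : ∑ j, p j = 1)
    (hscore : ∀ i, ∑ j, p j * g i j = 0)
    (hΔ : Δ ≠ 0) (z : ℝ) (hz : z = ∑ i, |Δ i|) :
    (∀ j, p j + ∑ i, Δ i * (p j * g i j) =
      ∑ i, (|Δ i| / z) * (p j * (1 + z * Real.sign (Δ i) * g i j))) ∧
    (∑ i, |Δ i| / z = 1) := by
  have hzpos : 0 < z := by
    obtain ⟨i, hi⟩ : ∃ i, Δ i ≠ 0 := by
      by_contra h; push_neg at h; exact hΔ (funext h)
    rw [hz]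
    exact Finset.sum_pos' (fun i _ => abs_nonneg _)
      ⟨i, Finset.mem_univ i, abs_pos.mpr hi⟩
  have hzne : z ≠ 0 := ne_of_gt hzpos
  have hsum1 : (∑ i, |Δ i| / z) = 1 := by
    rw [← Finset.sum_div, ← hz, div_self hzne]
  refine ⟨fun j => ?_, hsum1⟩
  have key : ∀ i : Fin N, (|Δ i| / z) * (p j * (1 + z * Real.sign (Δ i) * g i j))
      = |Δ i| / z * p j + Δ i * (p j * g i j) := by
    intro i
    have h : |Δ i| * Real.sign (Δ i) = Δ i := by
      rcases lt_trichotomy (Δ i) 0 with h' | h' | h'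
      · rw [Real.sign_of_neg h', abs_of_neg h']; ring
      · simp [h']
      · rw [Real.sign_of_pos h', abs_of_pos h']; ring
    field_simp
    linear_combination (p j * z * g i j) * h
  rw [Finset.sum_congr rfl (fun i _ => key i), Finset.sum_add_distrib,
    ← Finset.sum_mul, hsum1, one_mul]
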